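/- arXiv:2307.08940 — 5 statements merged into one kernel-verified Lean document; each statement's English description precedes it below -/
import Mathlib

section
/- Let p be a prime and r an integer. Then there exists a unique continuous function ψ : ℤ_p → ℚ_p such that for every positive integer n, ψ(n) = ∑_{0<k<n, p∤k} 1/k^{r+1} (the sum ranging over integers k with 0 < k < n not divisible by p). In other words, the p-adic polygamma function ψ_p^{(r)}(z) = lim_{n→z, n∈ℤ_{>0}} ∑_{0<k<n, p∤k} k^{−(r+1)} is a well-defined continuous function on ℤ_p. -/
/-!
Put `S(n) = ∑_{k < n, p ∤ k} k ^ s` with `s = -(r + 1)`. On `p`-adic units `k ↦ k ^ s` is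
1-Lipschitz, so a block sum `S(n + m) - S(n)` changes by at most `p ^ (-M)` when `n` is moved
within its class mod `p ^ M`. Splitting a block of length `p ^ (M + 2)` into `p` blocks of length
`p ^ (M + 1)` then gives `‖S(n + p ^ (M + 1)) - S(n)‖ ≤ p ^ (-M)` by induction: up to those
errors the long block is `p` times one short block, and multiplying by `p` gains `p⁻¹`.
Hence `S` is uniformly continuous for the `p`-adic metric on `ℕ` and extends to `ℤ_p`;
uniqueness holds because the positive integers are dense in `ℤ_p`.
-/

open Finset IsUltrametricDist

theorem sub_eq_sum_range_sub_add_mul {G : Type*} [AddCommGroup G] (f : ℕ → G) (n q j : ℕ) :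
    f (n + j * q) - f n = ∑ i ∈ range j, (f (n + i * q + q) - f (n + i * q)) := by
  simpa [add_mul, add_assoc] using (sum_range_sub (fun i => f (n + i * q)) j).symm

section Ultrametric

variable {K : Type*} [NormedField K] [IsUltrametricDist K]

theorem norm_pow_sub_pow_le_of_norm_le_one {u v : K} (hu : ‖u‖ ≤ 1) (hv : ‖v‖ ≤ 1)
    (n : ℕ) : ‖u ^ n - v ^ n‖ ≤ ‖u - v‖ := by
  rw [← geom_sum₂_mul, norm_mul]
  refine mul_le_of_le_one_left (norm_nonneg _) (norm_sum_le_of_forall_le_of_nonneg zero_le_one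
    fun i _ => ?_)
  rw [norm_mul, norm_pow, norm_pow]
  exact mul_le_one₀ (pow_le_one₀ (norm_nonneg _) hu) (by positivity)
    (pow_le_one₀ (norm_nonneg _) hv)

theorem norm_zpow_sub_zpow_le_of_norm_eq_one {u v : K} (hu : ‖u‖ = 1) (hv : ‖v‖ = 1) :
    ∀ m : ℤ, ‖u ^ m - v ^ m‖ ≤ ‖u - v‖
  | .ofNat n => by
    simpa using norm_pow_sub_pow_le_of_norm_le_one hu.le hv.le n
  | .negSucc n => by
    have hu0 : u ≠ 0 := norm_ne_zero_iff.1 (by rw [hu]; exact one_ne_zero)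
    have hv0 : v ≠ 0 := norm_ne_zero_iff.1 (by rw [hv]; exact one_ne_zero)
    rw [zpow_negSucc, zpow_negSucc, inv_sub_inv (pow_ne_zero _ hu0) (pow_ne_zero _ hv0),
      norm_div, norm_mul, norm_pow, norm_pow, hu, hv, one_pow, mul_one, div_one, norm_sub_rev]
    exact norm_pow_sub_pow_le_of_norm_le_one hu.le hv.le (n + 1)

end Ultrametric

theorem Padic.norm_natCast_eq_one_of_not_dvd {p : ℕ} [Fact p.Prime] {k : ℕ} (hk : ¬ p ∣ k) :
    ‖(k : ℚ_[p])‖ = 1 :=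
  norm_natCast_eq_one_iff.2 ((Nat.Prime.coprime_iff_not_dvd Fact.out).2 hk)

namespace PadicInt

variable {p : ℕ} [Fact p.Prime]

theorem norm_natCast_sub_le_iff_modEq {a b M : ℕ} :
    ‖(a : ℤ_[p]) - b‖ ≤ (p : ℝ) ^ (-M : ℤ) ↔ a ≡ b [MOD p ^ M] := by
  rw [Nat.modEq_iff_dvd, ← dvd_neg, neg_sub, Nat.cast_pow, ← norm_int_le_pow_iff_dvd]
  push_cast
  rfl

theorem exists_continuous_extension_of_modEq {E : Type*} [MetricSpace E] [CompleteSpace E]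
    {f : ℕ → E}
    (hf : ∀ ε > 0, ∃ M : ℕ, ∀ a b : ℕ, a ≡ b [MOD p ^ M] → dist (f a) (f b) < ε) :
    ∃ ψ : ℤ_[p] → E, Continuous ψ ∧ ∀ n : ℕ, ψ n = f n := by
  let _ : UniformSpace ℕ := UniformSpace.comap ((↑) : ℕ → ℤ_[p]) inferInstance
  have hind : IsUniformInducing ((↑) : ℕ → ℤ_[p]) := ⟨rfl⟩
  have hbasis : (uniformity ℕ).HasBasis (fun ε : ℝ => 0 < ε)
      fun ε => {q : ℕ × ℕ | dist (q.1 : ℤ_[p]) q.2 < ε} :=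
    hind.comap_uniformity ▸ Metric.uniformity_basis_dist.comap _
  have huc : UniformContinuous f :=
    (hbasis.uniformContinuous_iff Metric.uniformity_basis_dist).2 fun ε hε => by
      obtain ⟨M, hM⟩ := hf ε hε
      refine ⟨(p : ℝ) ^ (-M : ℤ), zpow_pos (Nat.cast_pos.2 (Fact.out : p.Prime).pos) _,
        fun a b hab => hM a b ?_⟩
      exact norm_natCast_sub_le_iff_modEq.1 ((dist_eq_norm (a : ℤ_[p]) b) ▸ hab.le)
  exact ⟨_, (uniformContinuous_uniformly_extend hind denseRange_natCast huc).continuous,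
    uniformly_extend_of_ind hind denseRange_natCast huc⟩

theorem ext_of_forall_natCast_pos {X : Type*} [TopologicalSpace X] [T2Space X]
    {g h : ℤ_[p] → X} (hg : Continuous g) (hh : Continuous h)
    (H : ∀ n : ℕ, 0 < n → g n = h n) : g = h := by
  have hshift : (g ∘ (· + 1)) ∘ ((↑) : ℕ → ℤ_[p]) = (h ∘ (· + 1)) ∘ (↑) :=
    funext fun n => by simpa using H (n + 1) n.succ_pos
  have := denseRange_natCast.equalizer (hg.comp (continuous_add_const 1))
    (hh.comp (continuous_add_const 1)) hshift
  funext z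
  simpa using congr_fun this (z - 1)

end PadicInt

namespace PadicPolygamma

variable (p : ℕ) [Fact p.Prime] (s : ℤ)

noncomputable def summand (k : ℕ) : ℚ_[p] := if p ∣ k then 0 else (k : ℚ_[p]) ^ s

noncomputable def partialSum (n : ℕ) : ℚ_[p] := ∑ k ∈ range n, summand p s k

variable {p s}

theorem norm_summand_le_one (k : ℕ) : ‖summand p s k‖ ≤ 1 := by
  unfold summand
  split_ifs with hk
  · simp
  · rw [norm_zpow, Padic.norm_natCast_eq_one_of_not_dvd hk, one_zpow]

theorem norm_summand_sub_summand_le {a b M : ℕ} (h : a ≡ b [MOD p ^ M]) :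
    ‖summand p s a - summand p s b‖ ≤ (p : ℝ) ^ (-M : ℤ) := by
  rcases M with _ | M
  · calc ‖summand p s a - summand p s b‖ ≤ max ‖summand p s a‖ ‖summand p s b‖ := by
          simpa [sub_eq_add_neg] using norm_add_le_max (summand p s a) (-summand p s b)
      _ ≤ (p : ℝ) ^ (-(0 : ℕ) : ℤ) := by
          simpa using ⟨norm_summand_le_one a, norm_summand_le_one b⟩
  have hdvd : p ∣ a ↔ p ∣ b := h.dvd_iff (dvd_pow_self p M.succ_ne_zero)
  unfold summand
  by_cases ha : p ∣ a
  · simp only [ha, hdvd.1 ha, if_true, sub_self, norm_zero]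
    positivity
  have hb : ¬ p ∣ b := hdvd.not.1 ha
  simp only [ha, hb, if_false]
  refine (norm_zpow_sub_zpow_le_of_norm_eq_one (Padic.norm_natCast_eq_one_of_not_dvd ha)
    (Padic.norm_natCast_eq_one_of_not_dvd hb) s).trans ?_
  rw [← PadicInt.norm_natCast_sub_le_iff_modEq] at h
  exact_mod_cast h

theorem partialSum_add_sub_partialSum (n m : ℕ) :
    partialSum p s (n + m) - partialSum p s n = ∑ j ∈ range m, summand p s (n + j) := by
  rw [partialSum, partialSum, sum_range_add, add_sub_cancel_left]

theorem norm_partialSum_add_sub_sub_le_of_modEq {a b M : ℕ} (h : a ≡ b [MOD p ^ M]) (m : ℕ) :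
    ‖(partialSum p s (a + m) - partialSum p s a) - (partialSum p s (b + m) - partialSum p s b)‖
      ≤ (p : ℝ) ^ (-M : ℤ) := by
  rw [partialSum_add_sub_partialSum, partialSum_add_sub_partialSum, ← sum_sub_distrib]
  exact norm_sum_le_of_forall_le_of_nonneg (by positivity)
    fun j _ => norm_summand_sub_summand_le (h.add_right j)

theorem norm_partialSum_add_pow_sub_le (M n : ℕ) :
    ‖partialSum p s (n + p ^ (M + 1)) - partialSum p s n‖ ≤ (p : ℝ) ^ (-M : ℤ) := by
  induction M generalizing n with
  | zero =>
    rw [partialSum_add_sub_partialSum]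
    simpa using norm_sum_le_of_forall_le_of_nonneg zero_le_one
      fun j _ => norm_summand_le_one (n + j)
  | succ M ih =>
    set q := p ^ (M + 1)
    set D := fun m => partialSum p s (m + q) - partialSum p s m
    have hsplit : partialSum p s (n + p ^ (M + 1 + 1)) - partialSum p s n
        = ∑ i ∈ range p, (D (n + i * q) - D n) + (p : ℚ_[p]) * D n := by
      rw [pow_succ', sub_eq_sum_range_sub_add_mul]
      simp only [D, sum_sub_distrib, sum_const, card_range, nsmul_eq_mul]
      ring
    rw [hsplit]
    refine (norm_add_le_max _ _).trans (max_le ?_ ?_)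
    · exact norm_sum_le_of_forall_le_of_nonneg (by positivity)
        fun i _ => norm_partialSum_add_sub_sub_le_of_modEq (Nat.add_mul_mod_self_right n i q) q
    · rw [norm_mul, Padic.norm_p]
      have hp : (p : ℝ) ≠ 0 := Nat.cast_ne_zero.2 (Fact.out : p.Prime).ne_zero
      calc (p : ℝ)⁻¹ * ‖D n‖ ≤ (p : ℝ)⁻¹ * (p : ℝ) ^ (-M : ℤ) := by
            gcongr
            exact ih n
        _ = (p : ℝ) ^ (-(M + 1 : ℕ) : ℤ) := by
          rw [← zpow_neg_one, ← zpow_add₀ hp]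
          push_cast
          ring_nf

theorem norm_partialSum_sub_le_of_modEq {a b M : ℕ} (h : a ≡ b [MOD p ^ (M + 1)]) :
    ‖partialSum p s a - partialSum p s b‖ ≤ (p : ℝ) ^ (-M : ℤ) := by
  wlog hba : b ≤ a generalizing a b
  · rw [norm_sub_rev]
    exact this h.symm (le_of_not_ge hba)
  obtain ⟨j, rfl⟩ : ∃ j, a = b + j * p ^ (M + 1) := by
    obtain ⟨j, hj⟩ := (Nat.modEq_iff_dvd' hba).1 h.symm
    exact ⟨j, by rw [mul_comm, ← hj]; omega⟩
  rw [sub_eq_sum_range_sub_add_mul]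
  exact norm_sum_le_of_forall_le_of_nonneg (by positivity)
    fun i _ => norm_partialSum_add_pow_sub_le M _

theorem exists_modEq_dist_partialSum_lt :
    ∀ ε > 0, ∃ M : ℕ, ∀ a b : ℕ, a ≡ b [MOD p ^ M] →
      dist (partialSum p s a) (partialSum p s b) < ε := by
  intro ε hε
  obtain ⟨M, hM⟩ := exists_pow_lt_of_lt_one hε
    (inv_lt_one_of_one_lt₀ (Nat.one_lt_cast.2 (Fact.out : p.Prime).one_lt))
  refine ⟨M + 1, fun a b h => ?_⟩
  rw [dist_eq_norm]
  exact (norm_partialSum_sub_le_of_modEq h).trans_lt (by rwa [zpow_neg, zpow_natCast, ← inv_pow])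

theorem partialSum_neg_eq_sum_Ico (r : ℤ) {n : ℕ} (hn : 0 < n) :
    partialSum p (-(r + 1)) n
      = ∑ k ∈ Ico 1 n, if p ∣ k then 0 else ((k : ℚ_[p]) ^ (r + 1))⁻¹ := by
  rw [partialSum, range_eq_Ico, sum_eq_sum_Ico_succ_bot hn, summand, if_pos (dvd_zero p), zero_add]
  simp only [summand, zpow_neg]

end PadicPolygamma

/-- **Existence and uniqueness of the p-adic polygamma function.**
For a prime `p` and an integer `r`, there is a unique continuous function
`ψ : ℤ_p → ℚ_p` with `ψ(n) = ∑_{0<k<n, p∤k} 1/k^{r+1}` for every positive integer `n`. -/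
theorem stmt_0 (p : ℕ) [Fact p.Prime] (r : ℤ) :
    ∃! ψ : ℤ_[p] → ℚ_[p],
      Continuous ψ ∧
        ∀ n : ℕ, 0 < n →
          ψ (n : ℤ_[p]) =
            ∑ k ∈ Finset.Ico 1 n, if p ∣ k then 0 else ((k : ℚ_[p]) ^ (r + 1))⁻¹ := by
  obtain ⟨ψ, hψ_cont, hψ⟩ := PadicInt.exists_continuous_extension_of_modEq
    (PadicPolygamma.exists_modEq_dist_partialSum_lt (p := p) (s := -(r + 1)))
  have hψ_pos : ∀ n : ℕ, 0 < n → ψ n =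
      ∑ k ∈ Finset.Ico 1 n, if p ∣ k then 0 else ((k : ℚ_[p]) ^ (r + 1))⁻¹ :=
    fun n hn => (hψ n).trans (PadicPolygamma.partialSum_neg_eq_sum_Ico r hn)
  refine ⟨ψ, ⟨hψ_cont, hψ_pos⟩, fun φ ⟨hφ_cont, hφ⟩ => ?_⟩
  exact PadicInt.ext_of_forall_natCast_pos hφ_cont hψ_cont
    fun n hn => (hφ n hn).trans (hψ_pos n hn).symm
end

section
/- Let p be a prime and b, x ∈ ℤ_(p) with 0 < b < 1 and 0 < x < 1, and set μ := p(1 − b^{(1)}) − (1 − b), an integer with 0 ≤ μ ≤ p−1. Define B := (p·x^{(1)} − p·b^{(1)})_+ if x − b ∉ pℤ_p, and B := 1 if x − b ∈ pℤ_p. Then Γ_p(x − b + 1 + μ) / (x − b + 1)_μ = (−1)^μ · Γ_p(x − b + 1) / B, where (x − b + 1)_μ ≠ 0 since x − b + 1 > 0. -/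
open Finset

noncomputable section

/-- `α'` is the Dwork prime `α^{(1)}` of `α`: `α' = (α + T)/p` where `0 ≤ T < p`
and `α + T ≡ 0 (mod p)` (i.e. `(α + T)/p` has p-adic norm at most `1`). -/
def IsDworkPrime (p : ℕ) [Fact p.Prime] (α α' : ℚ) : Prop :=
  ∃ T : ℕ, T < p ∧ ‖(((α + T) / p : ℚ) : ℚ_[p])‖ ≤ 1 ∧ α' = (α + T) / p

/-- `(t)₊ = t` if `t > 0` and `1` otherwise. -/
def rplus (x : ℚ) : ℚ := if 0 < x then x else 1

/-- The Pochhammer symbol `(x)_m = x(x+1)⋯(x+m-1)`. -/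
def pochQ (x : ℚ) (m : ℕ) : ℚ := ∏ i ∈ range m, (x + i)

/-!
Put `h(z) = 1` for `z ∈ pℤ_p` and `h(z) = z` otherwise. The recursion defining `Γ_p` on positive
integers reads `Γ_p(m + 1) = -h(m) Γ_p(m)`; both sides are continuous on `ℤ_p` and `ℕ` is dense,
so `Γ_p(z + 1) = -h(z) Γ_p(z)` on all of `ℤ_p`, whence
`Γ_p(z + μ) = (-1)^μ ∏_{j<μ} h(z + j) Γ_p(z)`. For `z = x - b + 1` the quotient by `(z)_μ` is
therefore `(-1)^μ Γ_p(z)` divided by the product of those `z + j` that lie in `pℤ_p`.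
Writing `x + T_x = p x^{(1)}` and `b + T_b = p b^{(1)}`, one has `μ = p - 1 - T_b` and
`z + j ≡ j + 1 + T_b - T_x (mod pℤ_p)`, an integer of absolute value `< p`. So at most one factor lies
in `pℤ_p`: it exists iff `T_b < T_x`, and then `z + j = p x^{(1)} - p b^{(1)} = B`.
-/

lemma IsUltrametricDist.norm_add_le_iff_of_norm_le {E : Type*} [SeminormedAddCommGroup E]
    [IsUltrametricDist E] {a u : E} {r : ℝ} (hu : ‖u‖ ≤ r) : ‖a + u‖ ≤ r ↔ ‖a‖ ≤ r := by
  refine ⟨fun h => ?_, fun h => (norm_add_le_max a u).trans (max_le h hu)⟩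
  simpa using (norm_add_le_max (a + u) (-u)).trans (max_le h (by rwa [norm_neg]))

namespace Padic

variable {p : ℕ} [Fact p.Prime]

lemma norm_intCast_le_inv_iff_dvd (k : ℤ) : ‖(k : ℚ_[p])‖ ≤ (p : ℝ)⁻¹ ↔ (p : ℤ) ∣ k := by
  simpa using norm_int_le_pow_iff_dvd (p := p) k 1

lemma norm_intCast_add_le_inv_iff {k : ℤ} (hk : |k| < p) {u : ℚ_[p]} (hu : ‖u‖ ≤ (p : ℝ)⁻¹) :
    ‖(k : ℚ_[p]) + u‖ ≤ (p : ℝ)⁻¹ ↔ k = 0 := by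
  rw [IsUltrametricDist.norm_add_le_iff_of_norm_le hu, norm_intCast_le_inv_iff_dvd]
  exact ⟨fun h => Int.eq_zero_of_abs_lt_dvd h hk, fun h => h ▸ dvd_zero _⟩

end Padic

def gammaFactor (p : ℕ) [Fact p.Prime] (z : ℚ_[p]) : ℚ_[p] :=
  if ‖z‖ ≤ (p : ℝ)⁻¹ then 1 else z

section GammaFactor

variable {p : ℕ} [Fact p.Prime]

lemma continuous_gammaFactor : Continuous (gammaFactor p) := by
  refine continuous_const.if (fun z hz => ?_) continuous_id
  have hp : (p : ℝ)⁻¹ ≠ 0 := inv_ne_zero (Nat.cast_ne_zero.2 (Fact.out : p.Prime).ne_zero)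
  have hball : {z : ℚ_[p] | ‖z‖ ≤ (p : ℝ)⁻¹} = Metric.closedBall 0 (p : ℝ)⁻¹ := by
    ext; simp
  rw [hball, IsUltrametricDist.frontier_closedBall_eq_empty 0 hp] at hz
  exact hz.elim

lemma gammaFactor_natCast (m : ℕ) : gammaFactor p m = if p ∣ m then 1 else (m : ℚ_[p]) := by
  have := Padic.norm_intCast_le_inv_iff_dvd (p := p) m
  simp only [Int.cast_natCast, Int.natCast_dvd_natCast] at this
  simp only [gammaFactor, this]

lemma prod_eq_prod_filter_mul_prod_gammaFactor {ι : Type*} (s : Finset ι) (f : ι → ℚ_[p]) :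
    ∏ i ∈ s, f i = (∏ i ∈ s with ‖f i‖ ≤ (p : ℝ)⁻¹, f i) * ∏ i ∈ s, gammaFactor p (f i) := by
  simp only [gammaFactor, prod_ite, prod_const_one, one_mul, prod_filter_mul_prod_filter_not]

end GammaFactor

section PadicGamma

variable {p : ℕ} [Fact p.Prime] {Γ : ℚ_[p] → ℚ_[p]}

lemma gamma_natCast_add_one
    (hΓ : ∀ m : ℕ, 0 < m →
      Γ (m : ℚ_[p]) = (-1 : ℚ_[p]) ^ m * ∏ k ∈ Finset.Ico 1 m, if p ∣ k then 1 else (k : ℚ_[p]))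
    {m : ℕ} (hm : 0 < m) : Γ ((m : ℚ_[p]) + 1) = -gammaFactor p m * Γ m := by
  have h := hΓ (m + 1) m.succ_pos
  rw [prod_Ico_succ_top hm, pow_succ, Nat.cast_succ] at h
  rw [h, hΓ m hm, gammaFactor_natCast]
  ring

lemma gamma_add_one (hΓc : ContinuousOn Γ {x : ℚ_[p] | ‖x‖ ≤ 1})
    (hrec : ∀ m : ℕ, 0 < m → Γ ((m : ℚ_[p]) + 1) = -gammaFactor p m * Γ m)
    (w : ℤ_[p]) : Γ (w + 1) = -gammaFactor p w * Γ w := by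
  have hcont : Continuous fun w : ℤ_[p] => Γ w :=
    hΓc.comp_continuous continuous_subtype_val fun w => w.2
  have hdense : DenseRange fun n : ℕ => ((n + 1 : ℕ) : ℤ_[p]) := by
    simpa only [Function.comp_def, Nat.cast_succ] using
      (add_right_surjective (1 : ℤ_[p])).denseRange.comp PadicInt.denseRange_natCast
        (continuous_add_const 1)
  have hrhs : Continuous fun w : ℤ_[p] => -gammaFactor p w * Γ w :=
    (continuous_gammaFactor.comp continuous_subtype_val).neg.mul hcont
  refine congrFun (hdense.equalizer (hcont.comp (continuous_add_const 1)) hrhs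
    (funext fun n => ?_)) w
  simpa using hrec (n + 1) n.succ_pos

lemma gamma_add_nat (hfeq : ∀ w : ℤ_[p], Γ (w + 1) = -gammaFactor p w * Γ w)
    (w : ℤ_[p]) (n : ℕ) :
    Γ (w + n) = (-1) ^ n * (∏ j ∈ range n, gammaFactor p (w + j)) * Γ w := by
  induction n with
  | zero => simp
  | succ n ih =>
    have h := hfeq (w + n)
    push_cast at h
    rw [Nat.cast_succ, ← add_assoc, h, ih, prod_range_succ, pow_succ]
    ring

end PadicGamma

lemma IsDworkPrime.exists_add_eq_mul {p : ℕ} [Fact p.Prime] {α α' : ℚ}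
    (h : IsDworkPrime p α α') : ∃ T : ℕ, T < p ∧ ‖(α' : ℚ_[p])‖ ≤ 1 ∧ α + T = p * α' := by
  obtain ⟨T, hT, hnorm, rfl⟩ := h
  have hp : (p : ℚ) ≠ 0 := Nat.cast_ne_zero.2 (Fact.out : p.Prime).ne_zero
  exact ⟨T, hT, hnorm, by field_simp⟩

namespace DworkPrime

variable {p : ℕ} [Fact p.Prime] {x b x1 b1 : ℚ} {Tx Tb : ℕ}

lemma norm_natCast_mul_sub_le_inv (hx1 : ‖(x1 : ℚ_[p])‖ ≤ 1)
    (hb1 : ‖(b1 : ℚ_[p])‖ ≤ 1) :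
    ‖((p * (x1 - b1) : ℚ) : ℚ_[p])‖ ≤ (p : ℝ)⁻¹ := by
  rw [Rat.cast_mul, Rat.cast_natCast, norm_mul, Padic.norm_p, Rat.cast_sub, sub_eq_add_neg]
  exact mul_le_of_le_one_right (by positivity)
    ((IsUltrametricDist.norm_add_le_max _ _).trans (max_le hx1 (by rwa [norm_neg])))

lemma sub_add_intCast_eq (hx : x + Tx = p * x1) (hb : b + Tb = p * b1) (k : ℤ) :
    ((x - b + k : ℚ) : ℚ_[p])
      = ((k + Tb - Tx : ℤ) : ℚ_[p]) + ((p * (x1 - b1) : ℚ) : ℚ_[p]) := by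
  have h : x - b + k = ((k + Tb - Tx : ℤ) : ℚ) + p * (x1 - b1) := by
    push_cast; linear_combination hx - hb
  rw [h, Rat.cast_add, Rat.cast_intCast]

lemma norm_sub_add_intCast_le_one (hx : x + Tx = p * x1) (hb : b + Tb = p * b1)
    (hx1 : ‖(x1 : ℚ_[p])‖ ≤ 1) (hb1 : ‖(b1 : ℚ_[p])‖ ≤ 1) (k : ℤ) :
    ‖((x - b + k : ℚ) : ℚ_[p])‖ ≤ 1 := by
  have hp : (p : ℝ)⁻¹ ≤ 1 :=
    inv_le_one_of_one_le₀ (by exact_mod_cast (Fact.out : p.Prime).one_le)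
  rw [sub_add_intCast_eq hx hb]
  exact (IsUltrametricDist.norm_add_le_max _ _).trans
    (max_le (Padic.norm_int_le_one _) ((norm_natCast_mul_sub_le_inv hx1 hb1).trans hp))

lemma norm_sub_add_intCast_le_inv_iff (hx : x + Tx = p * x1) (hb : b + Tb = p * b1)
    (hx1 : ‖(x1 : ℚ_[p])‖ ≤ 1) (hb1 : ‖(b1 : ℚ_[p])‖ ≤ 1) {k : ℤ} (hk : |k + Tb - Tx| < p) :
    ‖((x - b + k : ℚ) : ℚ_[p])‖ ≤ (p : ℝ)⁻¹ ↔ k + Tb = Tx := by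
  rw [sub_add_intCast_eq hx hb,
    Padic.norm_intCast_add_le_inv_iff hk (norm_natCast_mul_sub_le_inv hx1 hb1)]
  omega

lemma prod_filter_norm_le_inv (hx : x + Tx = p * x1) (hb : b + Tb = p * b1)
    (hx1 : ‖(x1 : ℚ_[p])‖ ≤ 1) (hb1 : ‖(b1 : ℚ_[p])‖ ≤ 1) (hTx : Tx < p) {μ : ℕ}
    (hμ : μ + Tb + 1 = p) :
    ∏ j ∈ range μ with ‖((x - b + 1 : ℚ) : ℚ_[p]) + (j : ℕ)‖ ≤ (p : ℝ)⁻¹,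
        (((x - b + 1 : ℚ) : ℚ_[p]) + j)
      = ((if Tb < Tx then p * x1 - p * b1 else 1 : ℚ) : ℚ_[p]) := by
  have hsmall : ∀ j ∈ range μ,
      ‖((x - b + 1 : ℚ) : ℚ_[p]) + j‖ ≤ (p : ℝ)⁻¹ ↔ j + 1 + Tb = Tx := by
    intro j hj
    rw [mem_range] at hj
    have hcast : ((x - b + 1 : ℚ) : ℚ_[p]) + j = ((x - b + ((j + 1 : ℕ) : ℤ) : ℚ) : ℚ_[p]) :=
      by push_cast; ring
    rw [hcast, norm_sub_add_intCast_le_inv_iff hx hb hx1 hb1 (by rw [abs_lt]; omega)]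
    omega
  rw [filter_congr hsmall]
  split_ifs with hlt
  · obtain ⟨j, rfl⟩ : ∃ j, Tx = j + 1 + Tb := ⟨Tx - Tb - 1, by omega⟩
    have hsingle : {i ∈ range μ | i + 1 + Tb = j + 1 + Tb} = {j} := by
      ext i; simp only [mem_filter, mem_range, mem_singleton]; omega
    rw [hsingle, prod_singleton]
    have h : x - b + 1 + j = p * x1 - p * b1 := by push_cast at hx; linear_combination hx - hb
    rw [← h]; push_cast; ring
  · rw [filter_false_of_mem fun j hj => by omega, prod_empty, Rat.cast_one]

lemma ite_rplus_eq (hx : x + Tx = p * x1) (hb : b + Tb = p * b1)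
    (hx1 : ‖(x1 : ℚ_[p])‖ ≤ 1) (hb1 : ‖(b1 : ℚ_[p])‖ ≤ 1) (hTx : Tx < p) (hTb : Tb < p)
    (hx0 : 0 < x) (hxlt : x < 1) (hb0 : 0 < b) (hblt : b < 1) :
    (if ‖((x - b : ℚ) : ℚ_[p])‖ ≤ (p : ℝ)⁻¹ then 1 else rplus (p * x1 - p * b1))
      = if Tb < Tx then p * x1 - p * b1 else 1 := by
  have hnorm : ‖((x - b : ℚ) : ℚ_[p])‖ ≤ (p : ℝ)⁻¹ ↔ Tb = Tx := by
    simpa using norm_sub_add_intCast_le_inv_iff hx hb hx1 hb1 (k := 0) (by rw [abs_lt]; omega)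
  have hB : p * x1 - p * b1 = x - b + ((Tx : ℚ) - Tb) := by linear_combination hb - hx
  simp only [hnorm, rplus]
  rcases lt_trichotomy Tb Tx with hlt | heq | hgt
  · have : (Tb : ℚ) + 1 ≤ Tx := by exact_mod_cast hlt
    rw [if_neg hlt.ne, if_pos (by linarith), if_pos hlt]
  · rw [if_pos heq, if_neg heq.not_lt]
  · have : (Tx : ℚ) + 1 ≤ Tb := by exact_mod_cast hgt
    rw [if_neg hgt.ne', if_neg (by linarith), if_neg (not_lt.2 hgt.le)]

end DworkPrime

theorem stmt_7_general (p : ℕ) [Fact p.Prime]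
    (Γ : ℚ_[p] → ℚ_[p]) (hΓc : ContinuousOn Γ {x : ℚ_[p] | ‖x‖ ≤ 1})
    (hΓ : ∀ m : ℕ, 0 < m →
      Γ (m : ℚ_[p]) = (-1 : ℚ_[p]) ^ m * ∏ k ∈ Finset.Ico 1 m, if p ∣ k then 1 else (k : ℚ_[p]))
    (b x : ℚ)
    (hb0 : 0 < b) (hb1 : b < 1) (hx0 : 0 < x) (hx1 : x < 1)
    (b1 x1 : ℚ) (hb' : IsDworkPrime p b b1) (hx' : IsDworkPrime p x x1)
    (μ : ℕ) (hμ : (μ : ℚ) = p * (1 - b1) - (1 - b)) :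
    pochQ (x - b + 1) μ ≠ 0 ∧
      Γ ((x - b + 1 + μ : ℚ) : ℚ_[p]) / ((pochQ (x - b + 1) μ : ℚ) : ℚ_[p]) =
        (-1 : ℚ_[p]) ^ μ * Γ ((x - b + 1 : ℚ) : ℚ_[p]) /
          (((if ‖((x - b : ℚ) : ℚ_[p])‖ ≤ (p : ℝ)⁻¹ then 1
              else rplus (p * x1 - p * b1)) : ℚ) : ℚ_[p]) := by
  obtain ⟨Tb, hTb, hb1Z, hb⟩ := hb'.exists_add_eq_mul
  obtain ⟨Tx, hTx, hx1Z, hx⟩ := hx'.exists_add_eq_mul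
  have hμTb : μ + Tb + 1 = p := by
    have h : (μ : ℚ) + Tb + 1 = p := by rw [hμ]; linear_combination hb
    exact_mod_cast h
  have hpoch : pochQ (x - b + 1) μ ≠ 0 :=
    (prod_pos fun i _ => by have := i.cast_nonneg (α := ℚ); linarith).ne'
  refine ⟨hpoch, ?_⟩
  set z : ℚ_[p] := ((x - b + 1 : ℚ) : ℚ_[p])
  have hz : ‖z‖ ≤ 1 := by simpa [z] using DworkPrime.norm_sub_add_intCast_le_one hx hb hx1Z hb1Z 1
  have hΓz : Γ (z + μ) = (-1) ^ μ * (∏ j ∈ range μ, gammaFactor p (z + j)) * Γ z :=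
    gamma_add_nat (gamma_add_one hΓc fun _ => gamma_natCast_add_one hΓ) ⟨z, hz⟩ μ
  have hpochz : ((pochQ (x - b + 1) μ : ℚ) : ℚ_[p])
      = ((if Tb < Tx then p * x1 - p * b1 else 1 : ℚ) : ℚ_[p])
        * ∏ j ∈ range μ, gammaFactor p (z + j) := by
    rw [← DworkPrime.prod_filter_norm_le_inv hx hb hx1Z hb1Z hTx hμTb,
      ← prod_eq_prod_filter_mul_prod_gammaFactor, pochQ, Rat.cast_prod]
    push_cast [z]; rfl
  obtain ⟨hB, hG⟩ := mul_ne_zero_iff.1 (hpochz ▸ Rat.cast_ne_zero.2 hpoch)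
  rw [show ((x - b + 1 + μ : ℚ) : ℚ_[p]) = z + μ by push_cast [z]; rfl, hΓz, hpochz,
    DworkPrime.ite_rplus_eq hx hb hx1Z hb1Z hTx hTb hx0 hx1 hb0 hb1]
  field_simp

/-- **Lemma:** with `μ = p(1-b^{(1)}) - (1-b)` and
`B = (p x^{(1)} - p b^{(1)})₊` if `x - b ∉ pℤ_p`, `B = 1` if `x - b ∈ pℤ_p`, one has
`Γ_p(x-b+1+μ)/(x-b+1)_μ = (-1)^μ Γ_p(x-b+1)/B`, and `(x-b+1)_μ ≠ 0`. -/
theorem stmt_7 (p : ℕ) [Fact p.Prime]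
    (Γ : ℚ_[p] → ℚ_[p]) (hΓc : ContinuousOn Γ {x : ℚ_[p] | ‖x‖ ≤ 1})
    (hΓu : ∀ x : ℚ_[p], ‖x‖ ≤ 1 → ‖Γ x‖ = 1)
    (hΓ : ∀ m : ℕ, 0 < m →
      Γ (m : ℚ_[p]) = (-1 : ℚ_[p]) ^ m * ∏ k ∈ Finset.Ico 1 m, if p ∣ k then 1 else (k : ℚ_[p]))
    (b x : ℚ) (hbZ : ‖(b : ℚ_[p])‖ ≤ 1) (hxZ : ‖(x : ℚ_[p])‖ ≤ 1)
    (hb0 : 0 < b) (hb1 : b < 1) (hx0 : 0 < x) (hx1 : x < 1)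
    (b1 x1 : ℚ) (hb' : IsDworkPrime p b b1) (hx' : IsDworkPrime p x x1)
    (μ : ℕ) (hμ : (μ : ℚ) = p * (1 - b1) - (1 - b)) :
    pochQ (x - b + 1) μ ≠ 0 ∧
      Γ ((x - b + 1 + μ : ℚ) : ℚ_[p]) / ((pochQ (x - b + 1) μ : ℚ) : ℚ_[p]) =
        (-1 : ℚ_[p]) ^ μ * Γ ((x - b + 1 : ℚ) : ℚ_[p]) /
          (((if ‖((x - b : ℚ) : ℚ_[p])‖ ≤ (p : ℝ)⁻¹ then 1
              else rplus (p * x1 - p * b1)) : ℚ) : ℚ_[p]) :=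
  stmt_7_general p Γ hΓc hΓ b x hb0 hb1 hx0 hx1 b1 x1 hb' hx' μ hμ
end
end

section
/- Let K be a field of characteristic zero, let n ≥ s ≥ 1 be integers, and let ε_1,…,ε_n ∈ K with ε_1,…,ε_s pairwise distinct. Set F(z) := ∏_{i=1}^n (z − ε_i) and Δ(z) := ∏_{i=1}^s (z − ε_i). Then the following identity of polynomials in the variable x over K holds: ∑_{k=1}^s Δ'(ε_k)^{−1} · ∑_{i=0}^{n−1} ((−1)^{i+1+n}/(i+1)!) · (x + ε_k)^i · F^{(i+1)}(ε_k) = (−1)^{s+1} · ∏_{i=s+1}^n (x + ε_i), where F^{(j)} denotes the j-th derivative of F and Δ' the derivative of Δ (note Δ'(ε_k) ≠ 0 since ε_1,…,ε_s are pairwise distinct). -/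
/-!
Write `F = ∏ (X - ε_j)` and `r = ε_k`. Since `F(r) = 0`, Taylor's formula at `r` gives
`F = (X - r) · ∑_{i<n} F^{(i+1)}(r)/(i+1)! · (X - r)^i`; evaluating at `-x` and cancelling
`x + r` turns the inner sum into `∏_{j ≠ k} (x + ε_j)`. The factor `∏_{j>s} (x + ε_j)` then comes
out of the outer sum, and what remains is, up to the sign `(-1)^(s-1)`, the sum of the Lagrange
basis polynomials for the nodes `-ε_1, …, -ε_s`, which is `1`.
-/

/-- Polynomial derivative as a plain function (for iteration). -/
noncomputable def pder {K : Type*} [CommRing K] (f : Polynomial K) : Polynomial K :=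
  Polynomial.derivative f

open Polynomial Finset

namespace Polynomial

variable {R : Type*} [CommRing R]

theorem sum_range_hasseDeriv_eval_mul_pow (f : R[X]) (r : R) {n : ℕ} (hn : f.natDegree < n) :
    ∑ i ∈ range n, C ((hasseDeriv i f).eval r) * (X - C r) ^ i = f := by
  conv_rhs => rw [← sum_taylor_eq f r]
  rw [sum_over_range' _ (fun _ => by rw [C_0, zero_mul]) n (by rwa [natDegree_taylor])]
  simp only [taylor_coeff]

theorem eq_X_sub_C_mul_sum_hasseDeriv_of_isRoot {f : R[X]} {r : R} (hr : f.IsRoot r) {n : ℕ}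
    (hn : f.natDegree ≤ n) :
    f = (X - C r) * ∑ i ∈ range n, C ((hasseDeriv (i + 1) f).eval r) * (X - C r) ^ i := by
  conv_lhs => rw [← sum_range_hasseDeriv_eval_mul_pow f r (Nat.lt_succ_of_le hn)]
  rw [sum_range_succ', hasseDeriv_zero, LinearMap.id_apply, hr.eq_zero, C_0, zero_mul, add_zero,
    mul_sum]
  exact sum_congr rfl fun i _ => by ring

theorem prod_erase_X_add_C_eq_sum_hasseDeriv [IsDomain R] {ι : Type*} [DecidableEq ι]
    (s : Finset ι) (ε : ι → R) {k : ι} (hk : k ∈ s) :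
    ∏ j ∈ s.erase k, (X + C (ε j)) = ∑ i ∈ range #s,
      C ((-1) ^ (i + 1 + #s) * (hasseDeriv (i + 1) (∏ j ∈ s, (X - C (ε j)))).eval (ε k)) *
        (X + C (ε k)) ^ i := by
  set F : R[X] := ∏ j ∈ s, (X - C (ε j))
  have hroot : F.IsRoot (ε k) := by
    simp only [F, IsRoot, eval_prod]
    exact prod_eq_zero hk (by simp)
  have hcomp := congrArg (comp · (-X))
    (eq_X_sub_C_mul_sum_hasseDeriv_of_isRoot hroot (natDegree_finsetProd_X_sub_C_eq_card s ε).le)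
  have hneg : ∀ a : R, (X - C a).comp (-X) = -(X + C a) := fun a => by
    rw [sub_comp, X_comp, C_comp]; ring
  have hFneg : F.comp (-X) = (-1) ^ #s * ((X + C (ε k)) * ∏ j ∈ s.erase k, (X + C (ε j))) := by
    rw [mul_prod_erase s (fun j => X + C (ε j)) hk]
    simp only [F, prod_comp, hneg, prod_neg]
  simp only [hFneg, mul_comp, sum_comp, C_comp, pow_comp, hneg] at hcomp
  refine mul_left_cancel₀ (X_add_C_ne_zero (ε k)) ?_
  calc (X + C (ε k)) * ∏ j ∈ s.erase k, (X + C (ε j))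
      = (-1) ^ #s * ((-1) ^ #s * ((X + C (ε k)) * ∏ j ∈ s.erase k, (X + C (ε j)))) := by
        rw [← mul_assoc, ← pow_add, Even.neg_one_pow ⟨_, rfl⟩, one_mul]
    _ = _ := by
        rw [hcomp, mul_sum, mul_sum, mul_sum]
        refine sum_congr rfl fun i _ => ?_
        simp only [map_mul, map_pow, map_neg, map_one, neg_pow (X + C (ε k))]
        ring

theorem eval_pder_iterate (f : R[X]) (r : R) (k : ℕ) :
    (pder^[k] f).eval r = k.factorial * (hasseDeriv k f).eval r := by
  change ((⇑derivative)^[k] f).eval r = _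
  rw [← factorial_smul_hasseDeriv, LinearMap.smul_apply, eval_smul, nsmul_eq_mul]

theorem prod_erase_X_add_C_eq_sum_pder_iterate {K : Type*} [Field K] [CharZero K] {ι : Type*}
    [Fintype ι] [DecidableEq ι] (ε : ι → K) (k : ι) :
    ∑ i ∈ range (Fintype.card ι),
        C ((-1 : K) ^ (i + 1 + Fintype.card ι) / ((i + 1).factorial : K)) * (X + C (ε k)) ^ i *
          C ((pder^[i + 1] (∏ j, (X - C (ε j)))).eval (ε k)) =
      ∏ j ∈ univ.erase k, (X + C (ε j)) := by
  rw [prod_erase_X_add_C_eq_sum_hasseDeriv univ ε (mem_univ k), card_univ]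
  refine sum_congr rfl fun i _ => ?_
  rw [eval_pder_iterate, mul_right_comm, ← C_mul]
  have hfac : ((i + 1).factorial : K) ≠ 0 := Nat.cast_ne_zero.2 (i + 1).factorial_ne_zero
  congr 2
  field_simp

end Polynomial

namespace Lagrange

variable {F : Type*} [Field F] {ι : Type*} [DecidableEq ι] {s : Finset ι} {v : ι → F} {i : ι}

theorem basis_eq_C_nodalWeight_mul_nodal_erase (hi : i ∈ s) :
    Lagrange.basis s v i = C (nodalWeight s v i) * nodal (s.erase i) v := by
  rw [basis_eq_prod_sub_inv_mul_nodal_div hi, nodal_erase_eq_nodal_div hi]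

theorem nodalWeight_neg : nodalWeight s (-v) i = (-1) ^ #(s.erase i) * nodalWeight s v i := by
  rw [nodalWeight, nodalWeight, ← prod_neg]
  refine prod_congr rfl fun j _ => ?_
  rw [Pi.neg_apply, Pi.neg_apply, neg_sub_neg, ← neg_sub, inv_neg]

theorem sum_C_nodalWeight_mul_prod_erase_X_add_C (hvs : Set.InjOn v s) (hs : s.Nonempty) :
    ∑ i ∈ s, C (nodalWeight s v i) * ∏ j ∈ s.erase i, (X + C (v j)) = C ((-1) ^ (#s + 1)) := by
  have hinj : Set.InjOn (-v) s := fun a ha b hb h => hvs ha hb (neg_injective h)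
  calc _ = C ((-1) ^ (#s + 1)) * ∑ i ∈ s, Lagrange.basis s (-v) i := by
        rw [mul_sum]
        refine sum_congr rfl fun i hi => ?_
        rw [basis_eq_C_nodalWeight_mul_nodal_erase hi, nodalWeight_neg, ← mul_assoc, ← C_mul,
          ← card_erase_add_one hi, nodal]
        simp only [Pi.neg_apply, map_neg, sub_neg_eq_add]
        congr 2
        rw [← mul_assoc, ← pow_add, Even.neg_one_pow ⟨#(s.erase i) + 1, by ring⟩, one_mul]
    _ = _ := by rw [sum_basis hinj hs, mul_one]

end Lagrange

/-- **Partial fraction / Taylor expansion identity** used in the computation of the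
basis `ω̂(m)` at `z = 0`: with `F(z) = ∏_{i=1}^n (z - ε_i)`, `Δ(z) = ∏_{i=1}^s (z - ε_i)`
(`ε_1,…,ε_s` pairwise distinct),
`∑_{k≤s} Δ'(ε_k)⁻¹ ∑_{i=0}^{n-1} ((-1)^{i+1+n}/(i+1)!) (x+ε_k)^i F^{(i+1)}(ε_k)
  = (-1)^{s+1} ∏_{i>s} (x+ε_i)` as polynomials in `x`. -/
theorem stmt_10 (K : Type*) [Field K] [CharZero K] (n s : ℕ) (hs : 1 ≤ s) (hsn : s ≤ n)
    (ε : Fin n → K)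
    (hdist : ∀ i j : Fin n, (i : ℕ) < s → (j : ℕ) < s → i ≠ j → ε i ≠ ε j) :
    ∑ k ∈ Finset.univ.filter (fun k : Fin n => (k : ℕ) < s),
        Polynomial.C
            (((pder (∏ i ∈ Finset.univ.filter (fun i : Fin n => (i : ℕ) < s),
                (Polynomial.X - Polynomial.C (ε i)))).eval (ε k))⁻¹) *
          ∑ i ∈ Finset.range n,
            Polynomial.C ((-1 : K) ^ (i + 1 + n) / (Nat.factorial (i + 1) : K)) *
              (Polynomial.X + Polynomial.C (ε k)) ^ i *
              Polynomial.C ((pder^[i + 1] (∏ j : Fin n, (Polynomial.X - Polynomial.C (ε j)))).eval (ε k)) =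
      Polynomial.C ((-1 : K) ^ (s + 1)) *
        ∏ i ∈ Finset.univ.filter (fun i : Fin n => s ≤ (i : ℕ)),
          (Polynomial.X + Polynomial.C (ε i)) := by
  set S := univ.filter (fun k : Fin n => (k : ℕ) < s)
  set T := univ.filter (fun k : Fin n => s ≤ (k : ℕ))
  have hcard : #S = s := by rw [Fin.card_filter_val_lt, min_eq_right hsn]
  have hinj : Set.InjOn ε S := fun i hi j hj hij =>
    by_contra fun hne => hdist i j (mem_filter.1 hi).2 (mem_filter.1 hj).2 hne hij
  have hsplit : ∀ k ∈ S, ∏ j ∈ univ.erase k, (X + C (ε j)) =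
      (∏ j ∈ S.erase k, (X + C (ε j))) * ∏ j ∈ T, (X + C (ε j)) := fun k hk => by
    rw [← prod_filter_mul_prod_filter_not (univ.erase k) (fun j => (j : ℕ) < s), filter_erase]
    congr 2
    ext j
    have hks : (k : ℕ) < s := (mem_filter.1 hk).2
    simp only [T, mem_filter, mem_erase, mem_univ, and_true, true_and, not_lt]
    exact ⟨And.right, fun hj => ⟨by rintro rfl; omega, hj⟩⟩
  calc _ = ∑ k ∈ S, C (Lagrange.nodalWeight S ε k) *
          ((∏ j ∈ S.erase k, (X + C (ε j))) * ∏ j ∈ T, (X + C (ε j))) := by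
        refine sum_congr rfl fun k hk => ?_
        rw [Lagrange.nodalWeight_eq_eval_derivative_nodal hk, ← hsplit k hk,
          ← prod_erase_X_add_C_eq_sum_pder_iterate, Fintype.card_fin]
        rfl
    _ = C ((-1 : K) ^ (s + 1)) * ∏ i ∈ T, (X + C (ε i)) := by
        simp only [← mul_assoc, ← sum_mul]
        rw [Lagrange.sum_C_nodalWeight_mul_prod_erase_X_add_C hinj (card_pos.1 (by omega)), hcard]
end

section
/- Let A and B be finite multisets of real numbers, all of whose elements lie in the open interval (0,1), such that A is invariant under x ↦ 1−x (the multiset image of A under x ↦ 1−x equals A), B is invariant under x ↦ 1−x, and no element of B occurs in A. Then 2 · ∑_{b∈B} #{a ∈ A : a < b} = (card A) · (card B), where the sum and cardinalities count elements with multiplicity. -/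
open scoped Classical

/-!
Let `g b = #{a ∈ A : a < b}`. Since `A` avoids `b`, every `a ∈ A` lies either below `b` or above
it, and reflecting `A` by `x ↦ 1 - x` turns the elements above `b` into those below `1 - b`;
hence `g b + g (1 - b) = card A`. Summing over `B`, whose reflection is again `B`, counts
`∑_{b ∈ B} g b` twice on the left and gives `card A * card B` on the right.
-/

namespace Multiset

theorem sum_map_comp_of_map_eq {α β : Type*} [AddCommMonoid β] {f : α → α} {B : Multiset α}
    (hB : B.map f = B) (g : α → β) : (B.map (g ∘ f)).sum = (B.map g).sum := by
  rw [← map_map, hB]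

variable {α : Type*} [LinearOrder α]

theorem card_filter_lt_add_card_filter_gt (A : Multiset α) {b : α} (hb : b ∉ A) :
    card (A.filter (· < b)) + card (A.filter (b < ·)) = card A := by
  have hsplit : A.filter (fun a => ¬a < b) = A.filter (b < ·) :=
    filter_congr fun a ha => by
      rw [not_lt, le_iff_lt_or_eq, or_iff_left (ne_of_mem_of_not_mem ha hb).symm]
  rw [← hsplit, ← card_add, filter_add_not]

theorem card_filter_lt_apply_of_map_eq {f : α → α} (hf : StrictAnti f) {A : Multiset α}
    (hA : A.map f = A) (b : α) :
    card (A.filter (· < f b)) = card (A.filter (b < ·)) := by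
  conv_lhs => rw [← hA, filter_map, card_map]
  exact congrArg card (filter_congr fun a _ => hf.lt_iff_gt)

theorem card_filter_lt_add_card_filter_lt_apply {f : α → α} (hf : StrictAnti f)
    {A : Multiset α} (hA : A.map f = A) {b : α} (hb : b ∉ A) :
    card (A.filter (· < b)) + card (A.filter (· < f b)) = card A := by
  rw [card_filter_lt_apply_of_map_eq hf hA, card_filter_lt_add_card_filter_gt A hb]

end Multiset

theorem stmt_11_general (A B : Multiset ℝ)
    (hAinv : A.map (fun x => 1 - x) = A) (hBinv : B.map (fun x => 1 - x) = B)
    (hAB : ∀ x ∈ B, x ∉ A) :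
    2 * (B.map fun b => Multiset.card (A.filter fun a => a < b)).sum =
      Multiset.card A * Multiset.card B := by
  set g : ℝ → ℕ := fun b => Multiset.card (A.filter fun a => a < b)
  have hrefl : StrictAnti fun x : ℝ => 1 - x := fun _ _ h => sub_lt_sub_left h 1
  have hpair : ∀ b ∈ B, g b + g (1 - b) = Multiset.card A := fun b hb =>
    Multiset.card_filter_lt_add_card_filter_lt_apply hrefl hAinv (hAB b hb)
  calc 2 * (B.map g).sum = (B.map g).sum + (B.map (g ∘ fun x => 1 - x)).sum := by
        rw [Multiset.sum_map_comp_of_map_eq hBinv, two_mul]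
    _ = (B.map fun _ => Multiset.card A).sum := by
        rw [← Multiset.sum_map_add]
        exact congrArg _ (Multiset.map_congr rfl hpair)
    _ = Multiset.card A * Multiset.card B := by
        rw [Multiset.map_const', Multiset.sum_replicate, smul_eq_mul, mul_comm]

/-- **Counting identity:** if `A` and `B` are finite multisets of reals in `(0,1)`,
each invariant under `x ↦ 1 - x`, and no element of `B` occurs in `A`, then
`2 ∑_{b ∈ B} #{a ∈ A : a < b} = (card A)(card B)`. -/
theorem stmt_11 (A B : Multiset ℝ)
    (hA01 : ∀ x ∈ A, 0 < x ∧ x < 1) (hB01 : ∀ x ∈ B, 0 < x ∧ x < 1)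
    (hAinv : A.map (fun x => 1 - x) = A) (hBinv : B.map (fun x => 1 - x) = B)
    (hAB : ∀ x ∈ B, x ∉ A) :
    2 * (B.map fun b => Multiset.card (A.filter fun a => a < b)).sum =
      Multiset.card A * Multiset.card B :=
  stmt_11_general A B hAinv hBinv hAB
end

section
/- Let p be a prime and A a finite multiset of elements of ℤ_p such that the multiset image of A under the involution x ↦ 1 − x equals A. Then ( ∏_{a∈A} Γ_p(a) )^4 = 1, the product being taken with multiplicity. -/
/-!
For positive integers `n ≤ q = p^e`, the substitution `k ↦ q - k` shows
`Γ_p(n) Γ_p(q + 1 - n) ≡ ±∏_{0<k<q, p∤k} k (mod q)`, and that product of all units of `ℤ/qℤ`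
squares to `1` because inversion permutes the units. Approximating `x ∈ ℤ_p` by such `n` with
`e → ∞`, so that `q + 1 - n → 1 - x`, continuity gives `(Γ_p(x) Γ_p(1 - x))² = 1`. Pairing `a`
with `1 - a` in the invariant multiset `A` turns the fourth power of the product into a product
of such squares.
-/

open Finset Filter Topology

lemma Fintype.prod_univ_sq_eq_one {G : Type*} [CommGroup G] [Fintype G] :
    (∏ g : G, g) ^ 2 = 1 := by
  have h : (∏ g : G, g)⁻¹ = ∏ g : G, g := by
    rw [← prod_inv_distrib]
    exact Fintype.prod_equiv (Equiv.inv G) _ _ fun _ => rfl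
  rw [sq, mul_eq_one_iff_eq_inv, h]

lemma ZMod.prod_range_coprime_eq_prod_units (n : ℕ) [NeZero n] :
    ∏ k ∈ (range n).filter (·.Coprime n), (k : ZMod n) = ∏ u : (ZMod n)ˣ, (u : ZMod n) := by
  refine prod_bij' (fun k hk => ZMod.unitOfCoprime k (mem_filter.mp hk).2)
    (fun u _ => (u : ZMod n).val) (fun _ _ => mem_univ _) (fun u _ => ?_) (fun k hk => ?_)
    (fun u _ => ?_) (fun k hk => (ZMod.coe_unitOfCoprime _ _).symm)
  · exact mem_filter.mpr ⟨mem_range.mpr (ZMod.val_lt _), ZMod.val_coe_unit_coprime u⟩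
  · exact ZMod.val_cast_of_lt (mem_range.mp (mem_filter.mp hk).1)
  · exact Units.ext (ZMod.natCast_zmod_val _)

lemma ZMod.prod_range_coprime_sq (n : ℕ) [NeZero n] :
    (∏ k ∈ (range n).filter (·.Coprime n), (k : ZMod n)) ^ 2 = 1 := by
  rw [prod_range_coprime_eq_prod_units, ← Units.coe_prod, ← Units.val_pow_eq_pow_val,
    Fintype.prod_univ_sq_eq_one, Units.val_one]

def primeToFactorial (p n : ℕ) : ℕ := ∏ k ∈ Ico 1 n, if p ∣ k then 1 else k

lemma Nat.cast_primeToFactorial {R : Type*} [CommSemiring R] (p n : ℕ) :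
    (primeToFactorial p n : R) = ∏ k ∈ Ico 1 n, if p ∣ k then 1 else (k : R) := by
  simp [primeToFactorial, apply_ite]

lemma primeToFactorial_prime_pow {p : ℕ} (hp : p.Prime) {e : ℕ} (he : e ≠ 0) :
    primeToFactorial p (p ^ e) = ∏ k ∈ (range (p ^ e)).filter (·.Coprime (p ^ e)), k := by
  rw [primeToFactorial, prod_ite, prod_const_one, one_mul]
  refine prod_congr (ext fun k => ?_) fun _ _ => rfl
  rw [mem_filter, mem_filter, mem_Ico, mem_range,
    Nat.coprime_pow_right_iff (Nat.pos_of_ne_zero he), Nat.coprime_comm, hp.coprime_iff_not_dvd]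
  by_cases hk : k = 0 <;> simp [hk, Nat.one_le_iff_ne_zero]

/-- Gauss's generalization of Wilson's theorem, up to sign. -/
lemma primeToFactorial_prime_pow_sq {p : ℕ} (hp : p.Prime) {e : ℕ} (he : e ≠ 0) :
    (primeToFactorial p (p ^ e) : ZMod (p ^ e)) ^ 2 = 1 := by
  have : NeZero (p ^ e) := ⟨pow_ne_zero e hp.ne_zero⟩
  rw [primeToFactorial_prime_pow hp he, Nat.cast_prod, ZMod.prod_range_coprime_sq]

lemma primeToFactorial_mul_reflect_sq {p q n : ℕ} (hpq : p ∣ q) (hn : 1 ≤ n) (hnq : n ≤ q) :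
    ((primeToFactorial p n * primeToFactorial p (q + 1 - n) : ℕ) : ZMod q) ^ 2
      = (primeToFactorial p q : ZMod q) ^ 2 := by
  set f : ℕ → ZMod q := fun k => (if p ∣ k then 1 else (k : ZMod q)) ^ 2
  have hf : ∀ k ≤ q, f (q - k) = f k := fun k hk => by
    simp only [f, Nat.dvd_sub_iff_right hk hpq, Nat.cast_sub hk, ZMod.natCast_self, zero_sub]
    split_ifs <;> ring
  have hreflect := prod_Ico_reflect f n (Nat.le_succ q)
  rw [Nat.add_sub_cancel_left] at hreflect
  simp only [Nat.cast_mul, mul_pow, Nat.cast_primeToFactorial, ← prod_pow]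
  rw [← hreflect, prod_congr rfl fun k hk => hf k (mem_Ico.mp hk).2.le,
    prod_Ico_consecutive _ hn hnq]

namespace PadicInt

variable {p : ℕ} [Fact p.Prime]

lemma tendsto_zero_of_mem_span_pow {a : ℕ → ℤ_[p]}
    (ha : ∀ k, a k ∈ Ideal.span {(p : ℤ_[p]) ^ k}) : Tendsto a atTop (𝓝 0) := by
  have hp : ‖(p : ℤ_[p])‖ < 1 := by
    rw [norm_p]
    exact inv_lt_one_of_one_lt₀ (mod_cast (Fact.out : p.Prime).one_lt)
  refine squeeze_zero_norm (fun k => ?_) (tendsto_pow_atTop_nhds_zero_of_lt_one (norm_nonneg _) hp)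
  obtain ⟨c, hc⟩ := Ideal.mem_span_singleton'.mp (ha k)
  rw [← hc, norm_mul, norm_pow]
  exact mul_le_of_le_one_left (by positivity) c.norm_le_one

lemma tendsto_appr (x : ℤ_[p]) : Tendsto (fun k => (x.appr k : ℤ_[p])) atTop (𝓝 x) := by
  have := (tendsto_const_nhds (x := x)).sub (tendsto_zero_of_mem_span_pow (appr_spec · x))
  simpa using this

lemma tendsto_pow_p_atTop : Tendsto (fun k => (p : ℤ_[p]) ^ k) atTop (𝓝 0) :=
  tendsto_zero_of_mem_span_pow fun _ => Ideal.mem_span_singleton_self _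

end PadicInt

section Reflection

variable {p : ℕ} [Fact p.Prime] {Γ : ℤ_[p] → ℤ_[p]}

lemma gamma_mul_gamma_reflect_sq_sub_one_mem
    (hΓ : ∀ n : ℕ, 0 < n → Γ n = (-1) ^ n * primeToFactorial p n) {e n : ℕ} (he : e ≠ 0)
    (hn : 0 < n) (hnq : n ≤ p ^ e) :
    (Γ n * Γ ↑(p ^ e + 1 - n)) ^ 2 - 1 ∈ Ideal.span {(p : ℤ_[p]) ^ e} := by
  rw [← PadicInt.ker_toZModPow, RingHom.mem_ker, map_sub, map_one, sub_eq_zero, hΓ n hn,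
    hΓ _ (by omega)]
  simp only [map_pow, map_mul, map_neg, map_one, map_natCast]
  rw [mul_mul_mul_comm, ← pow_add, mul_pow, pow_right_comm, neg_one_sq, one_pow, one_mul,
    ← Nat.cast_mul, primeToFactorial_mul_reflect_sq (dvd_pow_self p he) hn hnq,
    primeToFactorial_prime_pow_sq Fact.out he]

theorem gamma_mul_gamma_one_sub_sq (hΓc : Continuous Γ)
    (hΓ : ∀ n : ℕ, 0 < n → Γ n = (-1) ^ n * primeToFactorial p n) (x : ℤ_[p]) :
    (Γ x * Γ (1 - x)) ^ 2 = 1 := by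
  -- adding `p ^ k` makes `n k` positive without changing it modulo `p ^ k`
  set n : ℕ → ℕ := fun k => x.appr k + p ^ k
  have hp := (Fact.out : p.Prime).two_le
  have hn_pos : ∀ k, 0 < n k := fun k => by positivity
  have hn_le : ∀ k, n k ≤ p ^ (k + 1) := fun k => by
    have := x.appr_lt k
    simp only [n]
    have : 2 * p ^ k ≤ p ^ (k + 1) := by rw [pow_succ']; exact Nat.mul_le_mul_right _ hp
    omega
  have hpow : Tendsto (fun k => (p : ℤ_[p]) ^ (k + 1)) atTop (𝓝 0) :=
    PadicInt.tendsto_pow_p_atTop.comp (tendsto_add_atTop_nat 1)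
  have hn_lim : Tendsto (fun k => (n k : ℤ_[p])) atTop (𝓝 x) := by
    simpa [n] using (PadicInt.tendsto_appr x).add PadicInt.tendsto_pow_p_atTop
  have hm_lim : Tendsto (fun k => ((p ^ (k + 1) + 1 - n k : ℕ) : ℤ_[p])) atTop (𝓝 (1 - x)) := by
    have := (hpow.add (tendsto_const_nhds (x := 1))).sub hn_lim
    rw [zero_add] at this
    refine this.congr fun k => ?_
    rw [Nat.cast_sub (by linarith [hn_le k])]
    push_cast
    rfl
  have hone : Tendsto (fun k => (Γ (n k) * Γ ↑(p ^ (k + 1) + 1 - n k)) ^ 2) atTop (𝓝 1) := by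
    have := PadicInt.tendsto_zero_of_mem_span_pow fun k =>
      Ideal.span_singleton_le_span_singleton.mpr (pow_dvd_pow (p : ℤ_[p]) k.le_succ)
        (gamma_mul_gamma_reflect_sq_sub_one_mem hΓ k.succ_ne_zero (hn_pos k) (hn_le k))
    simpa using this.add_const 1
  exact tendsto_nhds_unique ((((hΓc.tendsto x).comp hn_lim).mul
    ((hΓc.tendsto (1 - x)).comp hm_lim)).pow 2) hone

end Reflection

lemma Multiset.prod_map_sq_eq_of_map_eq {α M : Type*} [CommMonoid M] {A : Multiset α}
    {σ : α → α} (hA : A.map σ = A) (f : α → M) :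
    (A.map f).prod ^ 2 = (A.map fun a => f a * f (σ a)).prod := by
  rw [sq]
  nth_rewrite 2 [← hA]
  rw [Multiset.map_map, ← Multiset.prod_map_mul]
  rfl

/-- **Reflection-type consequence for `Γ_p`:** if a finite multiset `A ⊆ ℤ_p` is
invariant under `x ↦ 1 - x`, then `(∏_{a ∈ A} Γ_p(a))⁴ = 1`. -/
theorem stmt_16 (p : ℕ) [Fact p.Prime]
    (Γ : ℤ_[p] → ℤ_[p]) (hΓc : Continuous Γ)
    (hΓ : ∀ n : ℕ, 0 < n →
      Γ (n : ℤ_[p]) = (-1 : ℤ_[p]) ^ n * ∏ k ∈ Finset.Ico 1 n, if p ∣ k then 1 else (k : ℤ_[p]))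
    (A : Multiset ℤ_[p]) (hA : A.map (fun a => 1 - a) = A) :
    ((A.map Γ).prod) ^ 4 = 1 := by
  have hΓ' (n : ℕ) (hn : 0 < n) : Γ n = (-1) ^ n * primeToFactorial p n := by
    rw [hΓ n hn, Nat.cast_primeToFactorial]
  calc (A.map Γ).prod ^ 4 = (A.map fun a => Γ a * Γ (1 - a)).prod ^ 2 := by
        rw [← Multiset.prod_map_sq_eq_of_map_eq hA, ← pow_mul]
    _ = (A.map fun a => (Γ a * Γ (1 - a)) ^ 2).prod := (Multiset.prod_map_pow).symm
    _ = 1 := by simp [gamma_mul_gamma_one_sub_sq hΓc hΓ']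
end
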